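/- For every finite set N of divisions, every assignment partition ((N_k, X_k))_{k=1}^K of N, and every strict priority order ▷ on N, the Two-Stage Serial Dictatorship (T-SD) mechanism is strategy-proof: for every division i, every preference profile ≻, and every strict linear order ≻'_i on N, f^T_i(≻) ⪰_i f^T_i(≻'_i, ≻_{-i}). -/

import Mathlib

open scoped Classical

/-- Each division has a strict linear (total) preference order over workers. -/
def StrictProfile {α : Type*} (pref : α → α → α → Prop) : Prop :=
  ∀ i, IsStrictTotalOrder α (pref i)

/-- `pref'` is an improvement for division `i` with respect to `pref`. -/
def Improvement {α : Type*} (pref pref' : α → α → α → Prop) (i : α) : Prop :=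
  pref' i = pref i ∧
  (∀ j, j ≠ i → ∀ k, k ≠ i → pref j i k → pref' j i k) ∧
  (∀ j, j ≠ i → ∀ k, k ≠ i → ∀ l, l ≠ i → (pref j k l ↔ pref' j k l))

/-- The `r`-maximum element of the finite set `s` (chosen via Hilbert choice):
the element of `s` that `r`-beats every other element of `s`. -/
noncomputable def pick {α : Type*} [Nonempty α] (r : α → α → Prop) (s : Finset α) : α :=
  Classical.epsilon fun m => m ∈ s ∧ ∀ x ∈ s, x ≠ m → r m x

/-- `((Npart k, Xpart k))_k` is an assignment partition: `Npart` partitions the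
divisions, `Xpart` partitions the workers (both identified with `α`), and for each
group `k` we have separation (`Npart k ∩ Xpart k = ∅`) and balance
(`|Npart k| = |Xpart k|`). -/
def IsAPartition {α : Type*} {K : ℕ} (Npart Xpart : Fin K → Finset α) : Prop :=
  (∀ a : α, ∃! k, a ∈ Npart k) ∧
  (∀ a : α, ∃! k, a ∈ Xpart k) ∧
  (∀ k, ∀ a ∈ Npart k, a ∉ Xpart k) ∧
  (∀ k, (Npart k).card = (Xpart k).card)

/-- The choice set `X_{g(i)}` of division `i`: the worker set of `i`'s group. -/
noncomputable def choiceSet {α : Type*} [DecidableEq α] {K : ℕ}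
    (Npart Xpart : Fin K → Finset α) (i : α) : Finset α :=
  Finset.univ.biUnion fun k => if i ∈ Npart k then Xpart k else ∅

/-- An assignment is feasible under the assignment partition if `μ(N_k) = X_k` for all `k`. -/
def FeasibleAP {α : Type*} [DecidableEq α] {K : ℕ}
    (Npart Xpart : Fin K → Finset α) (μ : α → α) : Prop :=
  ∀ k, (Npart k).image μ = Xpart k

/-- Efficiency under the assignment partition: `μ` is feasible and no feasible
assignment `μ'` weakly improves every division and strictly improves some division. -/
def EfficientAP {α : Type*} [DecidableEq α] {K : ℕ}
    (Npart Xpart : Fin K → Finset α) (pref : α → α → α → Prop) (μ : α → α) : Prop :=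
  FeasibleAP Npart Xpart μ ∧
  ¬ ∃ μ' : α → α, Function.Bijective μ' ∧ FeasibleAP Npart Xpart μ' ∧
      (∀ i, μ' i = μ i ∨ pref i (μ' i) (μ i)) ∧ (∃ j, pref j (μ' j) (μ j))

/-- The list of the elements of `s` in decreasing `r`-priority order. -/
noncomputable def orderList {α : Type*} [DecidableEq α] [Nonempty α]
    (r : α → α → Prop) : ℕ → Finset α → List α
  | 0, _ => []
  | fuel + 1, s =>
    if s.Nonempty then pick r s :: orderList r fuel (s.erase (pick r s)) else []

/-- The Two-Stage Serial Dictatorship (T-SD) mechanism.  Stage 1: divisions,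
processed in exogenous `prio`-order, tentatively nominate their most preferred
not-yet-nominated worker from their group's choice set; the sequence of nominated
workers (as divisions, i.e. owners) is the final order.  Stage 2: divisions are
processed in the final order, and each is assigned its most preferred
not-yet-assigned worker from its group's choice set. -/
noncomputable def tsd {α : Type*} [Fintype α] [DecidableEq α] [Nonempty α] {K : ℕ}
    (Npart Xpart : Fin K → Finset α) (prio : α → α → Prop)
    (pref : α → α → α → Prop) : α → α :=
  let divs := orderList prio (Fintype.card α) Finset.univ
  let noms := divs.foldl
    (fun acc i => acc ++ [pick (pref i) (choiceSet Npart Xpart i \ acc.toFinset)]) []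
  (noms.foldl
    (fun (p : Finset α × (α → α)) j =>
      let w := pick (pref j) (choiceSet Npart Xpart j \ p.1)
      (insert w p.1, Function.update p.2 j w))
    (∅, fun a => a)).2

open Finset

def okRel {α : Type*} (r : α → α → Prop) : Prop :=
  (∀ a b c, r a b → r b c → r a c) ∧ (∀ a b, r a b ∨ a = b ∨ r b a)

lemma exists_rmax {α : Type*} [DecidableEq α] (r : α → α → Prop)
    (htr : ∀ a b c, r a b → r b c → r a c)
    (htri : ∀ a b, r a b ∨ a = b ∨ r b a) :
    ∀ s : Finset α, s.Nonempty → ∃ m, m ∈ s ∧ ∀ x ∈ s, x ≠ m → r m x := by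
  intro s
  induction s using Finset.induction_on with
  | empty => rintro ⟨x, hx⟩; simp at hx
  | @insert a t ha ih =>
    intro _
    rcases t.eq_empty_or_nonempty with rfl | ht
    · refine ⟨a, by simp, ?_⟩
      intro x hx hxa; simp at hx; exact absurd hx hxa
    · obtain ⟨m, hm, hmax⟩ := ih ht
      rcases htri a m with h | h | h
      · refine ⟨a, mem_insert_self _ _, ?_⟩
        intro x hx hxa
        rcases mem_insert.1 hx with rfl | hx
        · exact absurd rfl hxa
        · rcases eq_or_ne x m with rfl | hxm
          · exact h
          · exact htr _ _ _ h (hmax x hx hxm)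
      · exact absurd (h ▸ hm) ha
      · refine ⟨m, mem_insert_of_mem hm, ?_⟩
        intro x hx hxm
        rcases mem_insert.1 hx with rfl | hx
        · exact h
        · exact hmax x hx hxm


lemma pick_spec {α : Type*} [Nonempty α] [DecidableEq α] (r : α → α → Prop)
    (hr : okRel r) (s : Finset α) (hs : s.Nonempty) :
    pick r s ∈ s ∧ ∀ x ∈ s, x ≠ pick r s → r (pick r s) x :=
  Classical.epsilon_spec (exists_rmax r hr.1 hr.2 s hs)


lemma choiceSet_eq_of_mem {α : Type*} [DecidableEq α] {K : ℕ}
    {Npart Xpart : Fin K → Finset α} (hNu : ∀ a : α, ∃! k, a ∈ Npart k)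
    {j : α} {k0 : Fin K} (hj : j ∈ Npart k0) :
    choiceSet Npart Xpart j = Xpart k0 := by
  apply Finset.ext; intro x
  simp only [choiceSet, mem_biUnion, mem_univ, true_and]
  constructor
  · rintro ⟨k, hk⟩
    by_cases h : j ∈ Npart k
    · rw [if_pos h] at hk
      rwa [(hNu j).unique h hj] at hk
    · rw [if_neg h] at hk; simp at hk
  · intro hx; exact ⟨k0, by rw [if_pos hj]; exact hx⟩


lemma orderList_spec {α : Type*} [DecidableEq α] [Nonempty α] (r : α → α → Prop)
    (hr : okRel r) :
    ∀ (fuel : ℕ) (s : Finset α), s.card ≤ fuel →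
      (orderList r fuel s).toFinset = s ∧ (orderList r fuel s).Nodup := by
  intro fuel
  induction fuel with
  | zero =>
    intro s hs
    simp only [Nat.le_zero, Finset.card_eq_zero] at hs
    subst hs; simp [orderList]
  | succ n ih =>
    intro s hs
    by_cases hne : s.Nonempty
    · have hmem := (pick_spec r hr s hne).1
      have hcard : (s.erase (pick r s)).card ≤ n := by
        have := Finset.card_erase_of_mem hmem
        omega
      obtain ⟨h1, h2⟩ := ih (s.erase (pick r s)) hcard
      rw [orderList, if_pos hne]
      constructor
      · simp only [List.toFinset_cons, h1]
        exact Finset.insert_erase hmem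
      · refine List.Nodup.cons ?_ h2
        intro hc
        rw [← List.mem_toFinset, h1] at hc
        exact (Finset.notMem_erase _ _) hc
    · rw [orderList, if_neg hne]
      rw [Finset.not_nonempty_iff_eq_empty] at hne
      simp [hne]


lemma card_insert_inter {α : Type*} [DecidableEq α] {a : α} {s : Finset α} (t : Finset α)
    (ha : a ∉ s) :
    ((insert a s) ∩ t).card = (s ∩ t).card + (if a ∈ t then 1 else 0) := by
  by_cases h : a ∈ t
  · rw [if_pos h, Finset.insert_inter_of_mem h,
      Finset.card_insert_of_notMem (fun hc => ha (Finset.mem_of_mem_inter_left hc))]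
  · rw [if_neg h, Finset.insert_inter_of_notMem h]; omega


lemma sdiff_nonempty_of_card_lt {α : Type*} [DecidableEq α] {X A : Finset α}
    (h : (X ∩ A).card < X.card) : (X \ A).Nonempty := by
  rw [← Finset.sdiff_inter_self_left X A]
  rw [← Finset.card_pos, Finset.card_sdiff_of_subset (Finset.inter_subset_left)]
  omega


lemma mem_iff_of_forall₂ {α : Type*} {P : α → Prop} :
    ∀ {L L' : List α},
    List.Forall₂ (fun a b => a = b ∨ (P a ∧ P b)) L L' →
    ∀ {x : α}, ¬ P x → (x ∈ L ↔ x ∈ L') := by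
  intro L L' h
  induction h with
  | nil => simp
  | @cons a b l l' hab _ ih =>
    intro x hx
    simp only [List.mem_cons]
    rcases hab with rfl | ⟨h1, h2⟩
    · rw [ih hx]
    · constructor
      · rintro (rfl | h)
        · exact absurd h1 hx
        · exact Or.inr ((ih hx).1 h)
      · rintro (rfl | h)
        · exact absurd h2 hx
        · exact Or.inr ((ih hx).2 h)


lemma toFinset_append_singleton {α : Type*} [DecidableEq α] (l : List α) (w : α) :
    (l ++ [w]).toFinset = insert w l.toFinset := by
  ext x; simp [or_comm]


lemma nodup_append_singleton {α : Type*} (l : List α) (w : α)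
    (h : l.Nodup) (hw : w ∉ l) : (l ++ [w]).Nodup := by
  simp [List.nodup_append, h, hw]
  rintro a ha rfl; exact hw ha


lemma stage1 {α : Type*} [DecidableEq α] [Nonempty α] {K : ℕ}
    {Npart Xpart : Fin K → Finset α}
    (hNu : ∀ a : α, ∃! k, a ∈ Npart k)
    (hXu : ∀ a : α, ∃! k, a ∈ Xpart k)
    (pref pref' : α → α → α → Prop)
    (hpo : ∀ j, okRel (pref j)) (hpo' : ∀ j, okRel (pref' j))
    (i : α) (g : Fin K) (hig : i ∈ Npart g)
    (hpp : ∀ j, j ≠ i → pref' j = pref j) :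
    ∀ (l : List α), l.Nodup → ∀ (acc acc' : List α),
    List.Forall₂ (fun a b => a = b ∨ (a ∈ Xpart g ∧ b ∈ Xpart g)) acc acc' →
    acc.Nodup → acc'.Nodup →
    (∀ k, (acc.toFinset ∩ Xpart k).card + (l.toFinset ∩ Npart k).card = (Xpart k).card) →
    (∀ k, (acc'.toFinset ∩ Xpart k).card + (l.toFinset ∩ Npart k).card = (Xpart k).card) →
    (List.Forall₂ (fun a b => a = b ∨ (a ∈ Xpart g ∧ b ∈ Xpart g))
      (l.foldl (fun acc j => acc ++ [pick (pref j) (choiceSet Npart Xpart j \ acc.toFinset)]) acc)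
      (l.foldl (fun acc j => acc ++ [pick (pref' j) (choiceSet Npart Xpart j \ acc.toFinset)]) acc') ∧
     (l.foldl (fun acc j => acc ++ [pick (pref j) (choiceSet Npart Xpart j \ acc.toFinset)]) acc).Nodup ∧
     (l.foldl (fun acc j => acc ++ [pick (pref' j) (choiceSet Npart Xpart j \ acc.toFinset)]) acc').Nodup ∧
     (∀ k, ((l.foldl (fun acc j => acc ++ [pick (pref j) (choiceSet Npart Xpart j \ acc.toFinset)]) acc).toFinset ∩ Xpart k).card = (Xpart k).card) ∧
     (∀ k, ((l.foldl (fun acc j => acc ++ [pick (pref' j) (choiceSet Npart Xpart j \ acc.toFinset)]) acc').toFinset ∩ Xpart k).card = (Xpart k).card)) := by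
  intro l
  induction l with
  | nil =>
    intro _ acc acc' hrel hnd hnd' hcnt hcnt'
    refine ⟨hrel, hnd, hnd', ?_, ?_⟩ <;> intro k <;>
      [have := hcnt k; have := hcnt' k] <;> simpa using this
  | cons j l ih =>
    intro hnodup acc acc' hrel hnd hnd' hcnt hcnt'
    have hjl : j ∉ l := (List.nodup_cons.1 hnodup).1
    have hlnd : l.Nodup := (List.nodup_cons.1 hnodup).2
    obtain ⟨k0, hjk0, _⟩ := hNu j
    have hcs : choiceSet Npart Xpart j = Xpart k0 := choiceSet_eq_of_mem hNu hjk0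
    -- head count at k0 is at least 1
    have hheadcnt : ∀ (A : List α),
        (∀ k, (A.toFinset ∩ Xpart k).card + ((j :: l).toFinset ∩ Npart k).card = (Xpart k).card) →
        (Xpart k0 \ A.toFinset).Nonempty := by
      intro A hA
      apply sdiff_nonempty_of_card_lt
      rw [Finset.inter_comm]
      have h1 := hA k0
      have h2 : j ∈ (j :: l).toFinset ∩ Npart k0 := by
        simp [hjk0]
      have h3 : 0 < ((j :: l).toFinset ∩ Npart k0).card := Finset.card_pos.2 ⟨j, h2⟩
      omega
    have hS : (Xpart k0 \ acc.toFinset).Nonempty := hheadcnt acc hcnt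
    have hS' : (Xpart k0 \ acc'.toFinset).Nonempty := hheadcnt acc' hcnt'
    set w := pick (pref j) (choiceSet Npart Xpart j \ acc.toFinset) with hw
    set w' := pick (pref' j) (choiceSet Npart Xpart j \ acc'.toFinset) with hw'
    have hwmem : w ∈ Xpart k0 \ acc.toFinset := by
      rw [hw, hcs]; exact (pick_spec _ (hpo j) _ hS).1
    have hw'mem : w' ∈ Xpart k0 \ acc'.toFinset := by
      rw [hw', hcs]; exact (pick_spec _ (hpo' j) _ hS').1
    have hwX : w ∈ Xpart k0 := (Finset.mem_sdiff.1 hwmem).1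
    have hw'X : w' ∈ Xpart k0 := (Finset.mem_sdiff.1 hw'mem).1
    have hwa : w ∉ acc.toFinset := (Finset.mem_sdiff.1 hwmem).2
    have hw'a : w' ∉ acc'.toFinset := (Finset.mem_sdiff.1 hw'mem).2
    -- relation between the two picks
    have hrelw : w = w' ∨ (w ∈ Xpart g ∧ w' ∈ Xpart g) := by
      by_cases hjg : j ∈ Npart g
      · have : k0 = g := (hNu j).unique hjk0 hjg
        subst this
        exact Or.inr ⟨hwX, hw'X⟩
      · have hk0g : k0 ≠ g := fun h => hjg (h ▸ hjk0)
        have hsets : Xpart k0 \ acc.toFinset = Xpart k0 \ acc'.toFinset := by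
          apply Finset.ext; intro x
          simp only [Finset.mem_sdiff, List.mem_toFinset]
          constructor <;> rintro ⟨hx1, hx2⟩ <;> refine ⟨hx1, fun hc => hx2 ?_⟩
          · have hxg : x ∉ Xpart g := fun hxg => hk0g ((hXu x).unique hx1 hxg)
            exact (mem_iff_of_forall₂ hrel hxg).2 hc
          · have hxg : x ∉ Xpart g := fun hxg => hk0g ((hXu x).unique hx1 hxg)
            exact (mem_iff_of_forall₂ hrel hxg).1 hc
        have hji : j ≠ i := fun h => hjg (h ▸ hig)
        left
        rw [hw, hw', hcs, hsets, hpp j hji]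
    -- new accumulators
    have hnd1 : (acc ++ [w]).Nodup :=
      nodup_append_singleton _ _ hnd (fun hc => hwa (List.mem_toFinset.2 hc))
    have hnd1' : (acc' ++ [w']).Nodup :=
      nodup_append_singleton _ _ hnd' (fun hc => hw'a (List.mem_toFinset.2 hc))
    have hrel1 : List.Forall₂ (fun a b => a = b ∨ (a ∈ Xpart g ∧ b ∈ Xpart g))
        (acc ++ [w]) (acc' ++ [w']) :=
      List.rel_append hrel (List.Forall₂.cons hrelw List.Forall₂.nil)
    have hcnt1 : ∀ (A : List α) (u : α), u ∈ Xpart k0 → u ∉ A.toFinset →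
        (∀ k, (A.toFinset ∩ Xpart k).card + ((j :: l).toFinset ∩ Npart k).card = (Xpart k).card) →
        ∀ k, ((A ++ [u]).toFinset ∩ Xpart k).card + (l.toFinset ∩ Npart k).card = (Xpart k).card := by
      intro A u huX huA hA k
      rw [toFinset_append_singleton, card_insert_inter _ huA]
      have h1 := hA k
      have h2 : (j :: l).toFinset = insert j l.toFinset := by simp
      rw [h2, card_insert_inter _ (fun hc => hjl (List.mem_toFinset.1 hc))] at h1
      have h3 : (if u ∈ Xpart k then 1 else 0) = (if j ∈ Npart k then 1 else 0) := by
        by_cases hk : k = k0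
        · subst hk; rw [if_pos huX, if_pos hjk0]
        · rw [if_neg (fun hc => hk ((hXu u).unique hc huX)),
            if_neg (fun hc => hk ((hNu j).unique hc hjk0))]
      omega
    have := ih hlnd (acc ++ [w]) (acc' ++ [w']) hrel1 hnd1 hnd1'
      (hcnt1 acc w hwX hwa hcnt) (hcnt1 acc' w' hw'X hw'a hcnt')
    simpa using this


lemma sdiff_eq_of_inter_eq {α : Type*} [DecidableEq α] {X p1 p1' : Finset α}
    (h : X ∩ p1 = X ∩ p1') : X \ p1 = X \ p1' := by
  apply Finset.ext; intro x
  have hx := Finset.ext_iff.mp h x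
  simp only [Finset.mem_inter] at hx
  simp only [Finset.mem_sdiff]
  tauto


lemma inter_insert_of_mem' {α : Type*} [DecidableEq α] {X p : Finset α} {w : α}
    (h : w ∈ X) : X ∩ insert w p = insert w (X ∩ p) := by
  apply Finset.ext; intro x
  simp only [Finset.mem_inter, Finset.mem_insert]
  constructor
  · rintro ⟨hx1, rfl | hx2⟩
    · exact Or.inl rfl
    · exact Or.inr ⟨hx1, hx2⟩
  · rintro (rfl | ⟨hx1, hx2⟩)
    · exact ⟨h, Or.inl rfl⟩
    · exact ⟨hx1, Or.inr hx2⟩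


lemma inter_insert_of_not_mem' {α : Type*} [DecidableEq α] {X p : Finset α} {w : α}
    (h : w ∉ X) : X ∩ insert w p = X ∩ p := by
  apply Finset.ext; intro x
  simp only [Finset.mem_inter, Finset.mem_insert]
  constructor
  · rintro ⟨hx1, rfl | hx2⟩
    · exact absurd hx1 h
    · exact ⟨hx1, hx2⟩
  · rintro ⟨hx1, hx2⟩; exact ⟨hx1, Or.inr hx2⟩


lemma fold2_snd_of_not_mem {α : Type*} [DecidableEq α] [Nonempty α] {K : ℕ}
    {Npart Xpart : Fin K → Finset α} (pref : α → α → α → Prop) (i : α) :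
    ∀ (l : List α) (p : Finset α × (α → α)), i ∉ l →
    (l.foldl (fun (p : Finset α × (α → α)) j =>
      let w := pick (pref j) (choiceSet Npart Xpart j \ p.1)
      (insert w p.1, Function.update p.2 j w)) p).2 i = p.2 i := by
  intro l
  induction l with
  | nil => intro p _; rfl
  | cons a l ih =>
    intro p hi
    have hia : i ≠ a := fun h => hi (h ▸ List.mem_cons_self (a := a) (l := l))
    have hil : i ∉ l := fun h => hi (List.mem_cons_of_mem a h)
    rw [List.foldl_cons, ih _ hil]
    exact Function.update_of_ne hia _ _


lemma head_sdiff_nonempty {α : Type*} [DecidableEq α] [Nonempty α] {K : ℕ}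
    {Npart Xpart : Fin K → Finset α} {p1 : Finset α} {hd : α} {rest : List α} {k1 : Fin K}
    (hhd : hd ∈ Npart k1)
    (hA : ∀ k, (p1 ∩ Xpart k).card + (((hd :: rest).toFinset ∩ Npart k)).card
      = (Xpart k).card) :
    (Xpart k1 \ p1).Nonempty := by
  apply sdiff_nonempty_of_card_lt
  rw [Finset.inter_comm]
  have h1 := hA k1
  have h2 : hd ∈ (hd :: rest).toFinset ∩ Npart k1 := by simp [hhd]
  have h3 : 0 < ((hd :: rest).toFinset ∩ Npart k1).card := Finset.card_pos.2 ⟨hd, h2⟩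
  omega


lemma count_step {α : Type*} [DecidableEq α] [Nonempty α] {K : ℕ}
    {Npart Xpart : Fin K → Finset α} (hNu : ∀ a : α, ∃! k, a ∈ Npart k) (hXu : ∀ a : α, ∃! k, a ∈ Xpart k)
    {p1 : Finset α} {hd : α} {rest : List α} {k1 : Fin K} {u : α}
    (hhd : hd ∈ Npart k1) (hhdrest : hd ∉ rest) (huX : u ∈ Xpart k1) (huA : u ∉ p1)
    (hA : ∀ k, (p1 ∩ Xpart k).card + (((hd :: rest).toFinset ∩ Npart k)).card
      = (Xpart k).card) :
    ∀ k, ((insert u p1) ∩ Xpart k).card + ((rest.toFinset ∩ Npart k)).card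
      = (Xpart k).card := by
  intro k
  rw [card_insert_inter _ huA]
  have h1 := hA k
  have h2 : (hd :: rest).toFinset = insert hd rest.toFinset := by simp
  rw [h2, card_insert_inter _ (fun hc => hhdrest (List.mem_toFinset.1 hc))] at h1
  have h3 : (if u ∈ Xpart k then 1 else 0) = (if hd ∈ Npart k then 1 else 0) := by
    by_cases hk : k = k1
    · subst hk; rw [if_pos huX, if_pos hhd]
    · rw [if_neg (fun hc => hk ((hXu u).unique hc huX)),
        if_neg (fun hc => hk ((hNu hd).unique hc hhd))]
  omega


lemma stage2 {α : Type*} [DecidableEq α] [Nonempty α] {K : ℕ}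
    {Npart Xpart : Fin K → Finset α} 
    (hNu : ∀ a : α, ∃! k, a ∈ Npart k)
    (hXu : ∀ a : α, ∃! k, a ∈ Xpart k)
    (hsep : ∀ k, ∀ a ∈ Npart k, a ∉ Xpart k)
    (pref pref' : α → α → α → Prop)
    (hpo : ∀ j, okRel (pref j)) (hpo' : ∀ j, okRel (pref' j))
    (i : α) (g : Fin K) (hig : i ∈ Npart g)
    (hpp : ∀ j, j ≠ i → pref' j = pref j) :
    ∀ {l l' : List α},
    List.Forall₂ (fun a b => a = b ∨ (a ∈ Xpart g ∧ b ∈ Xpart g)) l l' →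
    l.Nodup → l'.Nodup → i ∈ l →
    ∀ (p1 p1' : Finset α) (f f' : α → α),
    Xpart g ∩ p1 = Xpart g ∩ p1' →
    (∀ k, (p1 ∩ Xpart k).card + ((l.toFinset ∩ Npart k)).card = (Xpart k).card) →
    (∀ k, (p1' ∩ Xpart k).card + ((l'.toFinset ∩ Npart k)).card = (Xpart k).card) →
    ∃ V : Finset α, V.Nonempty ∧
      (l.foldl (fun (p : Finset α × (α → α)) j =>
        let w := pick (pref j) (choiceSet Npart Xpart j \ p.1)
        (insert w p.1, Function.update p.2 j w)) (p1, f)).2 i = pick (pref i) V ∧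
      (l'.foldl (fun (p : Finset α × (α → α)) j =>
        let w := pick (pref' j) (choiceSet Npart Xpart j \ p.1)
        (insert w p.1, Function.update p.2 j w)) (p1', f')).2 i = pick (pref' i) V := by
  intro l l' hrel
  induction hrel with
  | nil => intro _ _ hi; simp at hi
  | @cons a b l l' hab htail ih =>
    intro hnd hnd' hi p1 p1' f f' hgeq hcnt hcnt'
    have hal : a ∉ l := (List.nodup_cons.1 hnd).1
    have hbl' : b ∉ l' := (List.nodup_cons.1 hnd').1
    have hlnd : l.Nodup := (List.nodup_cons.1 hnd).2
    have hl'nd : l'.Nodup := (List.nodup_cons.1 hnd').2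
    by_cases hai : a = i
    · -- the misreporter's turn: both heads are `i`
      have hbi : b = i := by
        rcases hab with h | ⟨h1, _⟩
        · exact hai ▸ h.symm
        · exact absurd (hai ▸ h1) (hsep g i hig)
      have hcs : choiceSet Npart Xpart i = Xpart g := choiceSet_eq_of_mem hNu hig
      have hVne : (Xpart g \ p1).Nonempty :=
        head_sdiff_nonempty (show a ∈ Npart g by rw [hai]; exact hig) hcnt
      have hVeq : Xpart g \ p1 = Xpart g \ p1' := sdiff_eq_of_inter_eq hgeq
      refine ⟨Xpart g \ p1, hVne, ?_, ?_⟩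
      · rw [List.foldl_cons, hai, fold2_snd_of_not_mem pref i l _ (hai ▸ hal)]
        simp only [hcs, Function.update_self]
      · rw [List.foldl_cons, hbi, fold2_snd_of_not_mem pref' i l' _ (hbi ▸ hbl')]
        simp only [hcs, hVeq, Function.update_self]
    · -- someone else's turn
      have hil : i ∈ l := by
        rcases List.mem_cons.1 hi with h | h
        · exact absurd h.symm hai
        · exact h
      have hbi : b ≠ i := by
        rcases hab with h | ⟨_, h2⟩
        · exact h ▸ hai
        · intro hc; exact hsep g i hig (hc ▸ h2)
      obtain ⟨ka, haka, _⟩ := hNu a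
      obtain ⟨kb, hbkb, _⟩ := hNu b
      have hcsa : choiceSet Npart Xpart a = Xpart ka := choiceSet_eq_of_mem hNu haka
      have hcsb : choiceSet Npart Xpart b = Xpart kb := choiceSet_eq_of_mem hNu hbkb
      have hSa : (Xpart ka \ p1).Nonempty := head_sdiff_nonempty haka hcnt
      have hSb : (Xpart kb \ p1').Nonempty := head_sdiff_nonempty hbkb hcnt'
      set w := pick (pref a) (choiceSet Npart Xpart a \ p1) with hwdef
      set w' := pick (pref' b) (choiceSet Npart Xpart b \ p1') with hw'def
      have hwmem : w ∈ Xpart ka \ p1 := by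
        rw [hwdef, hcsa]; exact (pick_spec _ (hpo a) _ hSa).1
      have hw'mem : w' ∈ Xpart kb \ p1' := by
        rw [hw'def, hcsb]; exact (pick_spec _ (hpo' b) _ hSb).1
      have hwX : w ∈ Xpart ka := (Finset.mem_sdiff.1 hwmem).1
      have hw'X : w' ∈ Xpart kb := (Finset.mem_sdiff.1 hw'mem).1
      have hwp : w ∉ p1 := (Finset.mem_sdiff.1 hwmem).2
      have hw'p : w' ∉ p1' := (Finset.mem_sdiff.1 hw'mem).2
      -- the X_g-part of the assigned sets stays equal
      have hgeq1 : Xpart g ∩ insert w p1 = Xpart g ∩ insert w' p1' := by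
        by_cases hag : a ∈ Npart g
        · -- a is a fellow group-g division: identical behaviour in both runs
          have hka : ka = g := (hNu a).unique haka hag
          have hba : b = a := by
            rcases hab with h | ⟨h1, _⟩
            · exact h.symm
            · exact absurd h1 (hsep g a (hka ▸ haka))
          have hkb : kb = g := (hNu b).unique hbkb (by rw [hba]; exact hag)
          have hsets : Xpart g \ p1 = Xpart g \ p1' := sdiff_eq_of_inter_eq hgeq
          have hww' : w = w' := by
            rw [hwdef, hw'def, hba, hpp a hai, hcsa, hka, hsets]
          rw [inter_insert_of_mem' (hka ▸ hwX), inter_insert_of_mem' (hkb ▸ hw'X),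
            hww', hgeq]
        · -- a (and b) are divisions of other groups: their picks avoid X_g
          have hkag : ka ≠ g := fun h => hag (h ▸ haka)
          have hbg : b ∉ Npart g := by
            rcases hab with h | ⟨_, h2⟩
            · exact h ▸ hag
            · exact fun hc => hsep g b hc h2
          have hkbg : kb ≠ g := fun h => hbg (h ▸ hbkb)
          have hwg : w ∉ Xpart g := fun hc => hkag ((hXu w).unique hwX hc)
          have hw'g : w' ∉ Xpart g := fun hc => hkbg ((hXu w').unique hw'X hc)
          rw [inter_insert_of_not_mem' hwg, inter_insert_of_not_mem' hw'g, hgeq]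
      have hcnt1 := count_step hNu hXu haka hal hwX hwp hcnt
      have hcnt1' := count_step hNu hXu hbkb hbl' hw'X hw'p hcnt'
      obtain ⟨V, hVne, hres, hres'⟩ :=
        ih hlnd hl'nd hil (insert w p1) (insert w' p1')
          (Function.update f a w) (Function.update f' b w') hgeq1 hcnt1 hcnt1'
      exact ⟨V, hVne, by rw [List.foldl_cons] at *; exact hres,
        by rw [List.foldl_cons] at *; exact hres'⟩


/-- Two-Stage Serial Dictatorship is strategy-proof: for every division `i`, every
preference profile and every misreport `q` of `i`, division `i` weakly prefers the
T-SD outcome under truth-telling to the T-SD outcome under the misreport. -/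
theorem tsd_strategyproof {α : Type*} [Fintype α] [DecidableEq α] [Nonempty α]
    {K : ℕ} (Npart Xpart : Fin K → Finset α)
    (hpart : IsAPartition Npart Xpart)
    (prio : α → α → Prop) (hprio : IsStrictTotalOrder α prio)
    (pref : α → α → α → Prop) (hpref : StrictProfile pref)
    (i : α) (q : α → α → Prop) (hq : IsStrictTotalOrder α q) :
    tsd Npart Xpart prio pref i = tsd Npart Xpart prio (Function.update pref i q) i ∨
    pref i (tsd Npart Xpart prio pref i)
      (tsd Npart Xpart prio (Function.update pref i q) i) := by
  obtain ⟨hNu, hXu, hsep, hbal⟩ := hpart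
  obtain ⟨g, hig, -⟩ := hNu i
  set pref' := Function.update pref i q with hpref'def
  have hqi : pref' i = q := by rw [hpref'def]; exact Function.update_self i q pref
  have hok : ∀ (r : α → α → Prop), IsStrictTotalOrder α r → okRel r := by
    intro r hr
    haveI := hr
    exact ⟨fun a b c hab hbc => _root_.trans hab hbc, fun a b => trichotomous a b⟩
  have hpo : ∀ j, okRel (pref j) := fun j => hok _ (hpref j)
  have hqok : okRel q := hok _ hq
  have hpo' : ∀ j, okRel (pref' j) := by
    intro j
    by_cases hj : j = i
    · subst hj; rw [hqi]; exact hqok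
    · rw [hpref'def, Function.update_of_ne hj]; exact hpo j
  have hpp : ∀ j, j ≠ i → pref' j = pref j := fun j hj => by
    rw [hpref'def, Function.update_of_ne hj]
  have hdivs := orderList_spec prio (hok _ hprio) (Fintype.card α) Finset.univ
    (by rw [Finset.card_univ])
  set divs := orderList prio (Fintype.card α) Finset.univ with hdivsdef
  have hcnt0 : ∀ k, ((([] : List α)).toFinset ∩ Xpart k).card
      + (divs.toFinset ∩ Npart k).card = (Xpart k).card := by
    intro k
    rw [hdivs.1]
    simp [Finset.univ_inter, hbal k]
  obtain ⟨hF, hnd, hnd', hcard, hcard'⟩ :=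
    stage1 hNu hXu pref pref' hpo hpo' i g hig hpp divs hdivs.2 [] []
      List.Forall₂.nil List.nodup_nil List.nodup_nil hcnt0 hcnt0
  set noms := divs.foldl
    (fun acc j => acc ++ [pick (pref j) (choiceSet Npart Xpart j \ acc.toFinset)]) []
    with hnomsdef
  set noms' := divs.foldl
    (fun acc j => acc ++ [pick (pref' j) (choiceSet Npart Xpart j \ acc.toFinset)]) []
    with hnoms'def
  have huniv : ∀ (L : List α), (∀ k, (L.toFinset ∩ Xpart k).card = (Xpart k).card) →
      L.toFinset = Finset.univ := by
    intro L hL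
    apply Finset.eq_univ_of_forall
    intro a
    obtain ⟨ka, haka, -⟩ := hXu a
    have h1 : L.toFinset ∩ Xpart ka = Xpart ka :=
      Finset.eq_of_subset_of_card_le Finset.inter_subset_right (le_of_eq (hL ka).symm)
    have h2 : a ∈ L.toFinset ∩ Xpart ka := by rw [h1]; exact haka
    exact (Finset.mem_inter.1 h2).1
  have hnomsuniv := huniv _ hcard
  have hnoms'univ := huniv _ hcard'
  have hinoms : i ∈ noms := by
    rw [← List.mem_toFinset, hnomsuniv]; exact Finset.mem_univ i
  have hscnt : ∀ k, ((∅ : Finset α) ∩ Xpart k).card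
      + (noms.toFinset ∩ Npart k).card = (Xpart k).card := by
    intro k; rw [hnomsuniv]; simp [hbal k]
  have hscnt' : ∀ k, ((∅ : Finset α) ∩ Xpart k).card
      + (noms'.toFinset ∩ Npart k).card = (Xpart k).card := by
    intro k; rw [hnoms'univ]; simp [hbal k]
  obtain ⟨V, hVne, h1, h2⟩ :=
    stage2 hNu hXu hsep pref pref' hpo hpo' i g hig hpp hF hnd hnd' hinoms
      ∅ ∅ (fun a => a) (fun a => a) rfl hscnt hscnt'
  have e1 : tsd Npart Xpart prio pref i =
      (noms.foldl (fun (p : Finset α × (α → α)) j =>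
        let w := pick (pref j) (choiceSet Npart Xpart j \ p.1)
        (insert w p.1, Function.update p.2 j w)) (∅, fun a => a)).2 i := rfl
  have e2 : tsd Npart Xpart prio pref' i =
      (noms'.foldl (fun (p : Finset α × (α → α)) j =>
        let w := pick (pref' j) (choiceSet Npart Xpart j \ p.1)
        (insert w p.1, Function.update p.2 j w)) (∅, fun a => a)).2 i := rfl
  rw [e1, e2, h1, h2, hqi]
  have hm := pick_spec (pref i) (hpo i) V hVne
  have hm' := pick_spec q hqok V hVne
  rcases eq_or_ne (pick (pref i) V) (pick q V) with h | h
  · exact Or.inl h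
  · exact Or.inr (hm.2 _ hm'.1 (Ne.symm h))
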